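/- Lower bound on the gradient with respect to the first layer (Lemma 3.1): Let c₀ > 0 and let the weights α satisfy L ≥ max(5c₀, 4c₀²) and ‖α‖_{F,∞} ≤ c₀ L^{-1/2}. Under activation assumption (i) and data assumption (iii), ‖∇_{α_1} J_L(α)‖_F² ≥ (1/(4N)) e^{-2c₀} L^{-1} J_L(α). -/

import Mathlib

open Finset

noncomputable section

/-- Euclidean norm of a vector in `ℝ^d`. -/
def vnorm {d : ℕ} (v : Fin d → ℝ) : ℝ := Real.sqrt (∑ i, v i ^ 2)

/-- Frobenius norm of a `d × d` real matrix. -/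
def frobNorm {d : ℕ} (A : Fin d → Fin d → ℝ) : ℝ := Real.sqrt (∑ i, ∑ j, A i j ^ 2)

/-- Matrix-vector product. -/
def mulVec' {d : ℕ} (A : Fin d → Fin d → ℝ) (v : Fin d → ℝ) : Fin d → ℝ :=
  fun i => ∑ j, A i j * v j

/-- Matrix-matrix product. -/
def matMul' {d : ℕ} (A B : Fin d → Fin d → ℝ) : Fin d → Fin d → ℝ :=
  fun i j => ∑ l, A i l * B l j

/-- Hidden states of the residual network: `h_0 = x` and
`h_{k+1} = h_k + L^{-1/2} σ_d(α_{k+1} h_k)`, where the weight of the (1-based)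
layer `k+1` is stored at the (0-based) index `k`. -/
def hiddenState {d L : ℕ} (σ : ℝ → ℝ) (α : Fin L → Fin d → Fin d → ℝ) (x : Fin d → ℝ) :
    ℕ → Fin d → ℝ
  | 0 => x
  | k + 1 =>
      if h : k < L then
        fun i => hiddenState σ α x k i + (Real.sqrt L)⁻¹ * σ (mulVec' (α ⟨k, h⟩) (hiddenState σ α x k) i)
      else hiddenState σ α x k

/-- One factor `I_d + L^{-1/2} diag(σ'(α_{k+1} h_k)) α_{k+1}` of the layer-to-output
Jacobian (0-based index `k`). -/
def layerJac {d L : ℕ} (σ : ℝ → ℝ) (α : Fin L → Fin d → Fin d → ℝ) (x : Fin d → ℝ)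
    (k : ℕ) (h : k < L) : Fin d → Fin d → ℝ :=
  fun i i' => (if i = i' then (1 : ℝ) else 0) +
    (Real.sqrt L)⁻¹ * deriv σ (mulVec' (α ⟨k, h⟩) (hiddenState σ α x k) i) * α ⟨k, h⟩ i i'

/-- Layer-to-output Jacobian `M_k^x(α) = ∂h_L/∂h_k`, where `k` is the 1-based
paper index, `0 ≤ k ≤ L`. -/
def jacM {d L : ℕ} (σ : ℝ → ℝ) (α : Fin L → Fin d → Fin d → ℝ) (x : Fin d → ℝ) :
    ℕ → Fin d → Fin d → ℝ
  | k =>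
      if h : k < L then matMul' (jacM σ α x (k + 1)) (layerJac σ α x k h)
      else fun i i' => if i = i' then 1 else 0
  termination_by k => L - k
  decreasing_by omega

/-- Mean-squared training loss `J_L`. -/
def loss {d L N : ℕ} (σ : ℝ → ℝ) (x y : Fin N → Fin d → ℝ)
    (α : Fin L → Fin d → Fin d → ℝ) : ℝ :=
  (1 / (2 * N)) * ∑ i, ∑ j, (y i j - hiddenState σ α (x i) L j) ^ 2

/-- Partial derivative of the loss with respect to the `(m,n)` entry of the
`k`-th weight matrix. -/
def gradEntry {d L N : ℕ} (σ : ℝ → ℝ) (x y : Fin N → Fin d → ℝ)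
    (α : Fin L → Fin d → Fin d → ℝ) (k : Fin L) (m n : Fin d) : ℝ :=
  fderiv ℝ (loss σ x y) α (Pi.single k (Pi.single m (Pi.single n 1)))

/-- `G_k^{x,y}(α) = (M_k^x(α))ᵀ (ŷ(x,α) − y)`; `k` is the 1-based paper index. -/
def Gvec {d L : ℕ} (σ : ℝ → ℝ) (α : Fin L → Fin d → Fin d → ℝ) (x y : Fin d → ℝ)
    (k : ℕ) : Fin d → ℝ :=
  fun n => ∑ j, jacM σ α x k j n * (hiddenState σ α x L j - y j)

/-- Assumption (i) on the activation function: `σ ∈ C²`, `σ'(0) = 1`, and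
`|σ(z)| ≤ |z|`, `|σ'(z)| ≤ 1`, `|σ''(z)| ≤ 1` for all `z`. -/
def ActAssump (σ : ℝ → ℝ) : Prop :=
  ContDiff ℝ 2 σ ∧ deriv σ 0 = 1 ∧
    ∀ z : ℝ, |σ z| ≤ |z| ∧ |deriv σ z| ≤ 1 ∧ |deriv (deriv σ) z| ≤ 1

/-!
The derivative of `J_L` along the `(m, n)` entry of `α₁` is
`(N √L)⁻¹ ∑ᵢ σ'((α₁ xᵢ)ₘ) (Gᵢ)ₘ xᵢₙ`, where `Gᵢ = M₁ᵀ (ŷ(xᵢ) - yᵢ)` is the backpropagated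
residual. Each backward step multiplies by `(I + Bₖ)ᵀ` with `‖Bₖ‖_F ≤ L^{-1/2} ‖αₖ‖_F ≤ c₀/L`, so
`‖Gᵢ‖ ≥ (1 - c₀/L)^(L-1) ‖ŷ(xᵢ) - yᵢ‖`, and on the first layer `σ' ≥ 1 - c₀/√L` because
`σ'(0) = 1`, `|σ''| ≤ 1` and `|(α₁ xᵢ)ₘ| ≤ c₀/√L`. Near-orthogonality of the inputs makes
`‖∑ᵢ aᵢ xᵢᵀ‖_F² ≥ (7/8) ∑ᵢ ‖aᵢ‖²`, and `e^{-2c₀} ≤ 7 ((1 - c₀/√L) (1 - c₀/L)^(L-1))²` finishes.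
-/

lemma exp_neg_add_sq_le_one_sub {t : ℝ} (h0 : 0 ≤ t) (h1 : t ≤ 1 / 3) :
    Real.exp (-(t + t ^ 2)) ≤ 1 - t := by
  have hexp := Real.quadratic_le_exp_of_nonneg (show 0 ≤ t + t ^ 2 by positivity)
  rw [Real.exp_neg, inv_le_iff_one_le_mul₀ (Real.exp_pos _)]
  nlinarith [mul_nonneg h0 h0, mul_nonneg (mul_nonneg h0 h0) h0]

lemma exp_two_mul_sq_le {s : ℝ} (h0 : 0 ≤ s) (h1 : s ≤ 1 / 2) :
    Real.exp (2 * s ^ 2) ≤ 7 * (1 - s) ^ 2 := by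
  have hhalf : Real.exp (1 / 2) ≤ 7 / 4 := by
    have hsq : Real.exp (1 / 2) ^ 2 = Real.exp 1 := by
      rw [← Real.exp_nat_mul]; norm_num
    nlinarith [Real.exp_one_lt_d9, Real.exp_pos (1 / 2)]
  calc Real.exp (2 * s ^ 2) ≤ Real.exp (1 / 2) := Real.exp_le_exp.mpr (by nlinarith)
    _ ≤ 7 * (1 - s) ^ 2 := by nlinarith

lemma mul_inv_sqrt_le_half {L : ℕ} {c : ℝ} (hc : 0 ≤ c) (hL : 4 * c ^ 2 ≤ L) :
    c * (√L)⁻¹ ≤ 1 / 2 := by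
  rcases hc.lt_or_eq with hc | rfl
  · have h2c : 2 * c ≤ √L := Real.le_sqrt_of_sq_le (by linarith)
    rw [mul_inv_le_iff₀ (by linarith)]
    linarith
  · norm_num

lemma inv_eight_mul_mul_sub_one_le {N : ℕ} (hN : 1 ≤ N) {u : ℝ} (hu0 : 0 ≤ u) (hu1 : u ≤ 1) :
    (8 * N : ℝ)⁻¹ * u * (N - 1) ≤ 1 / 8 := by
  have hN1 : (1 : ℝ) ≤ N := by exact_mod_cast hN
  have hN8 : (N - 1 : ℝ) / (8 * N) ≤ 1 / 8 := by
    rw [div_le_iff₀ (by positivity)]; linarith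
  have hN0 : 0 ≤ (N - 1 : ℝ) / (8 * N) := div_nonneg (by linarith) (by positivity)
  calc _ = (N - 1 : ℝ) / (8 * N) * u := by ring
    _ ≤ 1 / 8 := by nlinarith

/-- With `s = c/√L` and `t = c/L` (so `s² = c t`), `e^{-2c} = e^{2s²} (e^{-L(t+t²)})²`; bound
the first factor by `exp_two_mul_sq_le` and the second by `exp_neg_add_sq_le_one_sub`. -/
lemma exp_neg_two_mul_le_seven_mul_sq {L : ℕ} {c : ℝ} (hc : 0 < c) (hL1 : 5 * c ≤ L)
    (hL2 : 4 * c ^ 2 ≤ L) :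
    Real.exp (-(2 * c)) ≤ 7 * ((1 - c * (√L)⁻¹) * (1 - c / L) ^ (L - 1)) ^ 2 := by
  have hLpos : (0 : ℝ) < L := by linarith
  have hsqrt : 0 < √(L : ℝ) := Real.sqrt_pos.mpr hLpos
  set s := c * (√L)⁻¹ with hs
  set t := c / L with ht
  have hs0 : 0 ≤ s := by positivity
  have ht0 : 0 ≤ t := by positivity
  have hs1 : s ≤ 1 / 2 := mul_inv_sqrt_le_half hc.le hL2
  have ht1 : t ≤ 1 / 3 := by rw [ht, div_le_iff₀ hLpos]; linarith
  have hLt : (L : ℝ) * (t + t ^ 2) = c + s ^ 2 := by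
    rw [hs, ht, mul_pow, inv_pow, Real.sq_sqrt hLpos.le]; field_simp
  have hpow : Real.exp (-(c + s ^ 2)) ≤ (1 - t) ^ (L - 1) :=
    calc Real.exp (-(c + s ^ 2)) ≤ Real.exp (((L - 1 : ℕ) : ℝ) * (-(t + t ^ 2))) := by
          gcongr
          have : ((L - 1 : ℕ) : ℝ) ≤ L := by exact_mod_cast Nat.sub_le L 1
          nlinarith
      _ = Real.exp (-(t + t ^ 2)) ^ (L - 1) := Real.exp_nat_mul _ _
      _ ≤ (1 - t) ^ (L - 1) := by gcongr; exact exp_neg_add_sq_le_one_sub ht0 ht1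
  calc Real.exp (-(2 * c)) = Real.exp (2 * s ^ 2) * Real.exp (-(c + s ^ 2)) ^ 2 := by
        rw [← Real.exp_nat_mul, ← Real.exp_add]; push_cast; ring_nf
    _ ≤ 7 * (1 - s) ^ 2 * ((1 - t) ^ (L - 1)) ^ 2 := by
        gcongr
        exact exp_two_mul_sq_le hs0 hs1
    _ = 7 * ((1 - s) * (1 - t) ^ (L - 1)) ^ 2 := by ring

section Norms

variable {d : ℕ}

lemma vnorm_eq_norm (v : Fin d → ℝ) : vnorm v = ‖WithLp.toLp 2 v‖ := by
  simp [vnorm, EuclideanSpace.norm_eq]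

lemma vnorm_nonneg (v : Fin d → ℝ) : 0 ≤ vnorm v := Real.sqrt_nonneg _

lemma vnorm_sq (v : Fin d → ℝ) : vnorm v ^ 2 = ∑ i, v i ^ 2 :=
  Real.sq_sqrt (by positivity)

lemma abs_sum_mul_le_vnorm_mul (v w : Fin d → ℝ) : |∑ i, v i * w i| ≤ vnorm v * vnorm w := by
  have h := abs_real_inner_le_norm (WithLp.toLp 2 v) (WithLp.toLp 2 w)
  simpa [vnorm_eq_norm, PiLp.inner_apply, mul_comm] using h

lemma vnorm_sub_vnorm_le (v w : Fin d → ℝ) : vnorm v - vnorm w ≤ vnorm (v + w) := by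
  simpa [vnorm_eq_norm, WithLp.toLp_add] using
    norm_sub_norm_le (WithLp.toLp 2 v) (-WithLp.toLp 2 w)

lemma frobNorm_le_of_abs_le {A B : Fin d → Fin d → ℝ} {c : ℝ} (hc : 0 ≤ c)
    (h : ∀ i j, |A i j| ≤ c * |B i j|) : frobNorm A ≤ c * frobNorm B := by
  rw [frobNorm, frobNorm, ← Real.sqrt_sq hc, ← Real.sqrt_mul (sq_nonneg c), Finset.mul_sum]
  gcongr with i _
  rw [Finset.mul_sum]
  gcongr with j _
  rw [← sq_abs, ← sq_abs (B i j), ← mul_pow]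
  exact pow_le_pow_left₀ (abs_nonneg _) (h i j) 2

lemma abs_mulVec'_le (A : Fin d → Fin d → ℝ) (v : Fin d → ℝ) (i : Fin d) :
    |mulVec' A v i| ≤ frobNorm A * vnorm v := by
  refine (abs_sum_mul_le_vnorm_mul (A i) v).trans ?_
  gcongr
  · exact vnorm_nonneg v
  exact Real.sqrt_le_sqrt (Finset.single_le_sum (f := fun i => ∑ j, A i j ^ 2)
    (fun _ _ => by positivity) (Finset.mem_univ i))

lemma vnorm_vecMul_le (B : Fin d → Fin d → ℝ) (v : Fin d → ℝ) :
    vnorm (fun j => ∑ i, v i * B i j) ≤ frobNorm B * vnorm v := by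
  rw [vnorm, frobNorm, vnorm, ← Real.sqrt_mul (by positivity)]
  refine Real.sqrt_le_sqrt ?_
  calc ∑ j, (∑ i, v i * B i j) ^ 2 ≤ ∑ j, (∑ i, v i ^ 2) * ∑ i, B i j ^ 2 := by
        gcongr with j _
        exact Finset.sum_mul_sq_le_sq_mul_sq _ _ _
    _ = (∑ i, ∑ j, B i j ^ 2) * ∑ i, v i ^ 2 := by
        rw [← Finset.mul_sum, Finset.sum_comm, mul_comm]

end Norms

section Network

variable {d L : ℕ} {σ : ℝ → ℝ} {α : Fin L → Fin d → Fin d → ℝ} {x : Fin d → ℝ}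

lemma hiddenState_succ_of_lt {k : ℕ} (hk : k < L) :
    hiddenState σ α x (k + 1) = fun i => hiddenState σ α x k i +
      (√L)⁻¹ * σ (mulVec' (α ⟨k, hk⟩) (hiddenState σ α x k) i) := by
  rw [hiddenState, dif_pos hk]

lemma hiddenState_succ_of_le {k : ℕ} (hk : L ≤ k) :
    hiddenState σ α x (k + 1) = hiddenState σ α x k := by
  rw [hiddenState, dif_neg (by omega)]

lemma jacM_of_lt {k : ℕ} (hk : k < L) :
    jacM σ α x k = matMul' (jacM σ α x (k + 1)) (layerJac σ α x k hk) := by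
  rw [jacM, dif_pos hk]

lemma jacM_self : jacM σ α x L = fun i j => if i = j then 1 else 0 := by
  rw [jacM, dif_neg (lt_irrefl L)]

lemma sum_layerJac_mul {k : ℕ} (hk : k < L) (v : Fin d → ℝ) (i : Fin d) :
    ∑ j, layerJac σ α x k hk i j * v j = v i +
      (√L)⁻¹ * deriv σ (mulVec' (α ⟨k, hk⟩) (hiddenState σ α x k) i) *
        mulVec' (α ⟨k, hk⟩) v i := by
  simp only [layerJac, add_mul, Finset.sum_add_distrib, ite_mul, one_mul, zero_mul,
    Finset.sum_ite_eq, Finset.mem_univ, if_true, mulVec', Finset.mul_sum, mul_assoc]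

lemma sum_mul_layerJac {k : ℕ} (hk : k < L) (g : Fin d → ℝ) (j : Fin d) :
    ∑ i, g i * layerJac σ α x k hk i j = g j + ∑ i, g i *
      ((√L)⁻¹ * deriv σ (mulVec' (α ⟨k, hk⟩) (hiddenState σ α x k) i) * α ⟨k, hk⟩ i j) := by
  simp only [layerJac, mul_add, Finset.sum_add_distrib, mul_ite, mul_one, mul_zero,
    Finset.sum_ite_eq', Finset.mem_univ, if_true]

variable {y : Fin d → ℝ}

lemma Gvec_self : Gvec σ α x y L = hiddenState σ α x L - y := by
  ext j
  simp [Gvec, jacM_self, ite_mul]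

lemma Gvec_eq_sum_mul_layerJac {k : ℕ} (hk : k < L) :
    Gvec σ α x y k = fun j => ∑ i, Gvec σ α x y (k + 1) i * layerJac σ α x k hk i j := by
  ext j
  simp only [Gvec, jacM_of_lt hk, matMul', Finset.sum_mul]
  rw [Finset.sum_comm]
  exact Finset.sum_congr rfl fun _ _ => Finset.sum_congr rfl fun _ _ => by ring

lemma Gvec_of_lt {k : ℕ} (hk : k < L) :
    Gvec σ α x y k = Gvec σ α x y (k + 1) + fun j => ∑ i, Gvec σ α x y (k + 1) i *
      ((√L)⁻¹ * deriv σ (mulVec' (α ⟨k, hk⟩) (hiddenState σ α x k) i) * α ⟨k, hk⟩ i j) := by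
  ext j
  rw [Pi.add_apply, ← sum_mul_layerJac hk, Gvec_eq_sum_mul_layerJac hk]

lemma one_sub_mul_vnorm_Gvec_le {k : ℕ} (hk : k < L) (hσ' : ∀ z, |deriv σ z| ≤ 1) {c : ℝ}
    (hα : frobNorm (α ⟨k, hk⟩) ≤ c * (√L)⁻¹) :
    (1 - c / L) * vnorm (Gvec σ α x y (k + 1)) ≤ vnorm (Gvec σ α x y k) := by
  have hL : (0 : ℝ) < L := by exact_mod_cast (Nat.zero_le k).trans_lt hk
  have hB : frobNorm (fun i j => (√L)⁻¹ * deriv σ (mulVec' (α ⟨k, hk⟩)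
      (hiddenState σ α x k) i) * α ⟨k, hk⟩ i j) ≤ c / L := by
    calc _ ≤ (√L)⁻¹ * frobNorm (α ⟨k, hk⟩) := by
          refine frobNorm_le_of_abs_le (by positivity) fun i j => ?_
          rw [abs_mul, abs_mul, abs_of_pos (by positivity : (0 : ℝ) < (√L)⁻¹)]
          gcongr
          exact mul_le_of_le_one_right (by positivity) (hσ' _)
      _ ≤ (√L)⁻¹ * (c * (√L)⁻¹) := by gcongr
      _ = c / L := by
          rw [mul_left_comm, ← mul_inv, Real.mul_self_sqrt hL.le, div_eq_mul_inv]
  have hstep := vnorm_sub_vnorm_le (Gvec σ α x y (k + 1)) (fun j => ∑ i, Gvec σ α x y (k + 1) i *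
      ((√L)⁻¹ * deriv σ (mulVec' (α ⟨k, hk⟩) (hiddenState σ α x k) i) * α ⟨k, hk⟩ i j))
  rw [← Gvec_of_lt hk] at hstep
  nlinarith [vnorm_vecMul_le _ (Gvec σ α x y (k + 1)) |>.trans
    (mul_le_mul_of_nonneg_right hB (vnorm_nonneg _))]

lemma pow_mul_vnorm_le_vnorm_Gvec (hσ' : ∀ z, |deriv σ z| ≤ 1) {c : ℝ} (hcL : c / L ≤ 1)
    (hα : ∀ k, frobNorm (α k) ≤ c * (√L)⁻¹) {k : ℕ} (hk : k ≤ L) :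
    (1 - c / L) ^ (L - k) * vnorm (hiddenState σ α x L - y) ≤ vnorm (Gvec σ α x y k) := by
  induction hk using Nat.decreasingInduction with
  | self => simp [Gvec_self]
  | of_succ k hk ih =>
    calc (1 - c / L) ^ (L - k) * vnorm (hiddenState σ α x L - y)
        = (1 - c / L) * ((1 - c / L) ^ (L - (k + 1)) * vnorm (hiddenState σ α x L - y)) := by
          rw [← mul_assoc, ← pow_succ', show L - (k + 1) + 1 = L - k by omega]
      _ ≤ (1 - c / L) * vnorm (Gvec σ α x y (k + 1)) := by gcongr
      _ ≤ vnorm (Gvec σ α x y k) := one_sub_mul_vnorm_Gvec_le hk hσ' (hα _)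

end Network

section Derivative

variable {d L : ℕ} {σ : ℝ → ℝ}

def hiddenStateTangent (σ : ℝ → ℝ) (α e : Fin L → Fin d → Fin d → ℝ) (x : Fin d → ℝ) :
    ℕ → Fin d → ℝ
  | 0 => 0
  | k + 1 =>
      if h : k < L then
        fun i => hiddenStateTangent σ α e x k i +
          (√L)⁻¹ * deriv σ (mulVec' (α ⟨k, h⟩) (hiddenState σ α x k) i) *
            (mulVec' (e ⟨k, h⟩) (hiddenState σ α x k) i +
              mulVec' (α ⟨k, h⟩) (hiddenStateTangent σ α e x k) i)
      else hiddenStateTangent σ α e x k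

variable {α e : Fin L → Fin d → Fin d → ℝ} {x : Fin d → ℝ}

lemma hiddenStateTangent_succ_of_lt {k : ℕ} (hk : k < L) :
    hiddenStateTangent σ α e x (k + 1) = fun i => hiddenStateTangent σ α e x k i +
      (√L)⁻¹ * deriv σ (mulVec' (α ⟨k, hk⟩) (hiddenState σ α x k) i) *
        (mulVec' (e ⟨k, hk⟩) (hiddenState σ α x k) i +
          mulVec' (α ⟨k, hk⟩) (hiddenStateTangent σ α e x k) i) := by
  rw [hiddenStateTangent, dif_pos hk]

lemma hiddenStateTangent_succ_of_le {k : ℕ} (hk : L ≤ k) :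
    hiddenStateTangent σ α e x (k + 1) = hiddenStateTangent σ α e x k := by
  rw [hiddenStateTangent, dif_neg (by omega)]

lemma hasDerivAt_hiddenState (hσ : Differentiable ℝ σ) (k : ℕ) (j : Fin d) :
    HasDerivAt (fun t : ℝ => hiddenState σ (α + t • e) x k j)
      (hiddenStateTangent σ α e x k j) 0 := by
  induction k generalizing j with
  | zero => exact hasDerivAt_const _ _
  | succ k ih =>
    rcases lt_or_ge k L with hk | hk
    · simp only [hiddenState_succ_of_lt hk, hiddenStateTangent_succ_of_lt hk]
      have hpre : HasDerivAt (fun t : ℝ => mulVec' ((α + t • e) ⟨k, hk⟩)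
          (hiddenState σ (α + t • e) x k) j)
          (mulVec' (e ⟨k, hk⟩) (hiddenState σ α x k) j +
            mulVec' (α ⟨k, hk⟩) (hiddenStateTangent σ α e x k) j) 0 := by
        simp only [mulVec', ← Finset.sum_add_distrib]
        refine HasDerivAt.fun_sum fun i _ => ?_
        have hlin : HasDerivAt (fun t : ℝ => (α + t • e) ⟨k, hk⟩ j i) (e ⟨k, hk⟩ j i) 0 := by
          simpa using ((hasDerivAt_id (0 : ℝ)).mul_const (e ⟨k, hk⟩ j i)).const_add
            (α ⟨k, hk⟩ j i)
        exact (hlin.mul (ih i)).congr_deriv (by simp)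
      have hσz := (hσ (mulVec' (α ⟨k, hk⟩) (hiddenState σ α x k) j)).hasDerivAt
      exact ((ih j).add ((hσz.comp_of_eq 0 hpre (by simp)).const_mul (√L)⁻¹)).congr_deriv
        (by ring)
    · simpa only [hiddenState_succ_of_le hk, hiddenStateTangent_succ_of_le hk] using ih j

lemma differentiable_hiddenState (hσ : Differentiable ℝ σ) (x : Fin d → ℝ) (k : ℕ) (j : Fin d) :
    Differentiable ℝ fun α : Fin L → Fin d → Fin d → ℝ => hiddenState σ α x k j := by
  induction k generalizing j with
  | zero => exact differentiable_const _
  | succ k ih =>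
    rcases lt_or_ge k L with hk | hk
    · simp only [hiddenState_succ_of_lt hk, mulVec']
      refine (ih j).add ((hσ.comp (Differentiable.fun_sum fun i _ => ?_)).const_mul _)
      exact (by fun_prop : Differentiable ℝ fun α : Fin L → Fin d → Fin d → ℝ =>
        α ⟨k, hk⟩ j i).mul (ih i)
    · simpa only [hiddenState_succ_of_le hk] using ih j

variable {N : ℕ}

lemma fderiv_loss_apply (hσ : Differentiable ℝ σ) (x y : Fin N → Fin d → ℝ) :
    fderiv ℝ (loss σ x y) α e =
      (1 / N) * ∑ i, ∑ j, (hiddenState σ α (x i) L j - y i j) *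
        hiddenStateTangent σ α e (x i) L j := by
  have hdiff : Differentiable ℝ (loss (L := L) σ x y) :=
    (Differentiable.fun_sum fun i _ => Differentiable.fun_sum fun j _ =>
      ((differentiable_hiddenState hσ (x i) L j).const_sub _).pow 2).const_mul _
  have hline : HasDerivAt (fun t : ℝ => α + t • e) e 0 := by
    simpa using ((hasDerivAt_id (0 : ℝ)).smul_const e).const_add α
  have hchain := (hdiff α).hasFDerivAt.comp_hasDerivAt_of_eq 0 hline (by simp)
  have hdirect : HasDerivAt (fun t : ℝ => loss σ x y (α + t • e))
      ((1 / (2 * N)) * ∑ i, ∑ j, 2 * (y i j - hiddenState σ α (x i) L j) *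
        (0 - hiddenStateTangent σ α e (x i) L j)) 0 := by
    refine (HasDerivAt.fun_sum fun i _ => HasDerivAt.fun_sum fun j _ => ?_).const_mul _
    exact (((hasDerivAt_const _ (y i j)).sub (hasDerivAt_hiddenState hσ L j)).pow 2).congr_deriv
      (by simp)
  rw [hchain.unique hdirect, Finset.mul_sum, Finset.mul_sum]
  refine Finset.sum_congr rfl fun i _ => ?_
  rw [Finset.mul_sum, Finset.mul_sum]
  refine Finset.sum_congr rfl fun j _ => ?_
  field_simp
  ring

end Derivative

section Backpropagation

variable {d L : ℕ} {σ : ℝ → ℝ} {α e : Fin L → Fin d → Fin d → ℝ} {x y : Fin d → ℝ}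

/-- Adjoint identity: on a layer where the perturbation `e` vanishes, the tangent is pushed
forward by `layerJac` and `Gvec` is pulled back by it, so their pairing is unchanged. -/
lemma sum_Gvec_mul_hiddenStateTangent_succ {k : ℕ} (hk : k < L) (he : e ⟨k, hk⟩ = 0) :
    ∑ i, Gvec σ α x y (k + 1) i * hiddenStateTangent σ α e x (k + 1) i =
      ∑ j, Gvec σ α x y k j * hiddenStateTangent σ α e x k j := by
  have hT : ∀ i, hiddenStateTangent σ α e x (k + 1) i =
      ∑ j, layerJac σ α x k hk i j * hiddenStateTangent σ α e x k j := by
    intro i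
    simp [sum_layerJac_mul, hiddenStateTangent_succ_of_lt hk, he, mulVec']
  simp only [hT, Gvec_eq_sum_mul_layerJac hk, Finset.mul_sum, Finset.sum_mul]
  rw [Finset.sum_comm]
  exact Finset.sum_congr rfl fun _ _ => Finset.sum_congr rfl fun _ _ => by ring

lemma sum_Gvec_mul_hiddenStateTangent {k : ℕ} (hk : k ≤ L)
    (he : ∀ k' (hk' : k' < L), k ≤ k' → e ⟨k', hk'⟩ = 0) :
    ∑ j, Gvec σ α x y k j * hiddenStateTangent σ α e x k j =
      ∑ j, (hiddenState σ α x L j - y j) * hiddenStateTangent σ α e x L j := by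
  induction hk using Nat.decreasingInduction with
  | self => simp [Gvec_self]
  | of_succ k hk ih =>
    rw [← sum_Gvec_mul_hiddenStateTangent_succ hk (he k hk le_rfl)]
    exact ih fun k' hk' hkk' => he k' hk' (by omega)

lemma hiddenStateTangent_one_single (hL : 0 < L) (m n i : Fin d) :
    hiddenStateTangent σ α (Pi.single ⟨0, hL⟩ (Pi.single m (Pi.single n 1))) x 1 i =
      (√L)⁻¹ * deriv σ (mulVec' (α ⟨0, hL⟩) x i) * if i = m then x n else 0 := by
  rw [hiddenStateTangent_succ_of_lt hL]
  rcases eq_or_ne i m with rfl | him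
  · simp [hiddenStateTangent, hiddenState, mulVec', Pi.single_apply]
  · simp [hiddenStateTangent, hiddenState, mulVec', him]

end Backpropagation

/-- Near-orthogonality of the `x i` makes `a ↦ ∑ᵢ aᵢ xᵢᵀ` almost an isometry in
Frobenius norm: expanding the square, the cross terms are at most `ε ‖aᵢ‖ ‖aⱼ‖`, and
`(∑ᵢ ‖aᵢ‖)² ≤ card ι · ∑ᵢ ‖aᵢ‖²`. -/
lemma one_sub_mul_sum_sq_le_sum_sq_sum_mul {ι : Type*} [Fintype ι] [DecidableEq ι] {d : ℕ}
    (a x : ι → Fin d → ℝ) {ε : ℝ} (hε : 0 ≤ ε) (hx : ∀ i, vnorm (x i) = 1)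
    (hxx : ∀ i j, i ≠ j → |∑ n, x i n * x j n| ≤ ε) :
    (1 - ε * (Fintype.card ι - 1)) * ∑ i, ∑ m, a i m ^ 2 ≤
      ∑ m, ∑ n, (∑ i, a i m * x i n) ^ 2 := by
  set r : ι → ℝ := fun i => vnorm (a i)
  have hr : ∀ i, r i ^ 2 = ∑ m, a i m ^ 2 := fun i => vnorm_sq (a i)
  have hexpand : ∑ m, ∑ n, (∑ i, a i m * x i n) ^ 2 =
      ∑ i, ∑ j, (∑ m, a i m * a j m) * ∑ n, x i n * x j n := by
    calc ∑ m, ∑ n, (∑ i, a i m * x i n) ^ 2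
        = ∑ m, ∑ n, ∑ i, ∑ j, a i m * a j m * (x i n * x j n) := by
          refine Finset.sum_congr rfl fun m _ => Finset.sum_congr rfl fun n _ => ?_
          rw [sq, Finset.sum_mul_sum]
          exact Finset.sum_congr rfl fun i _ => Finset.sum_congr rfl fun j _ => by ring
      _ = ∑ m, ∑ i, ∑ j, ∑ n, a i m * a j m * (x i n * x j n) := by
          refine Finset.sum_congr rfl fun m _ => ?_
          rw [Finset.sum_comm]
          exact Finset.sum_congr rfl fun i _ => Finset.sum_comm
      _ = ∑ i, ∑ j, ∑ m, ∑ n, a i m * a j m * (x i n * x j n) := by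
          rw [Finset.sum_comm]
          exact Finset.sum_congr rfl fun i _ => Finset.sum_comm
      _ = _ := by simp only [Finset.sum_mul_sum]
  have hterm : ∀ i j, (if i = j then (1 + ε) * r i ^ 2 else 0) - ε * (r i * r j) ≤
      (∑ m, a i m * a j m) * ∑ n, x i n * x j n := by
    intro i j
    rcases eq_or_ne i j with rfl | hij
    · have hxi : ∑ n, x i n * x i n = 1 := by simpa [sq, hx i] using (vnorm_sq (x i)).symm
      have hai : ∑ m, a i m * a i m = r i ^ 2 := by simp only [hr, sq]
      rw [if_pos rfl, hxi, mul_one, hai]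
      linarith
    · have hprod := abs_mul (∑ m, a i m * a j m) (∑ n, x i n * x j n) ▸ mul_le_mul
        (abs_sum_mul_le_vnorm_mul (a i) (a j)) (hxx i j hij) (abs_nonneg _)
        (mul_nonneg (vnorm_nonneg _) (vnorm_nonneg _))
      simp only [hij, if_false, zero_sub]
      linarith [neg_abs_le ((∑ m, a i m * a j m) * ∑ n, x i n * x j n)]
  have hcard := sq_sum_le_card_mul_sum_sq (s := Finset.univ) (f := r)
  rw [hexpand]
  calc (1 - ε * (Fintype.card ι - 1)) * ∑ i, ∑ m, a i m ^ 2
      ≤ (1 + ε) * ∑ i, r i ^ 2 - ε * (∑ i, r i) ^ 2 := by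
        simp only [hr, Finset.card_univ] at hcard ⊢
        nlinarith
    _ = ∑ i, ∑ j, ((if i = j then (1 + ε) * r i ^ 2 else 0) - ε * (r i * r j)) := by
        rw [sq (∑ i, r i), Finset.sum_mul_sum, Finset.mul_sum, Finset.mul_sum]
        simp only [Finset.sum_sub_distrib, Finset.sum_ite_eq, Finset.mem_univ, if_true,
          Finset.mul_sum]
    _ ≤ _ := Finset.sum_le_sum fun i _ => Finset.sum_le_sum fun j _ => hterm i j

lemma sub_abs_le_of_abs_deriv_le_one {f : ℝ → ℝ} (hf : Differentiable ℝ f)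
    (hf' : ∀ z, |deriv f z| ≤ 1) (z : ℝ) : f 0 - |z| ≤ f z := by
  have h := Convex.norm_image_sub_le_of_norm_deriv_le (fun w _ => hf w) (fun w _ => hf' w)
    convex_univ (Set.mem_univ z) (Set.mem_univ 0)
  simp only [Real.norm_eq_abs, one_mul, zero_sub, abs_neg] at h
  linarith [le_abs_self (f 0 - f z)]

namespace ActAssump

variable {σ : ℝ → ℝ}

lemma differentiable (hσ : ActAssump σ) : Differentiable ℝ σ :=
  hσ.1.differentiable (by norm_num)

lemma one_sub_abs_le_deriv (hσ : ActAssump σ) (z : ℝ) : 1 - |z| ≤ deriv σ z := by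
  obtain ⟨hC2, h0, hb⟩ := hσ
  simpa [h0] using sub_abs_le_of_abs_deriv_le_one
    ((hC2.iterate_deriv' 1 1).differentiable one_ne_zero) (fun z => (hb z).2.2) z

end ActAssump

section Gradient

variable {d L N : ℕ} {σ : ℝ → ℝ}

lemma sq_mul_vnorm_sq_le_sum_sq_deriv_mul_Gvec (hσ : ActAssump σ) (hL : 0 < L)
    {α : Fin L → Fin d → Fin d → ℝ} {c : ℝ} (hs : c * (√L)⁻¹ ≤ 1) (hcL : c / L ≤ 1)
    (hα : ∀ k, frobNorm (α k) ≤ c * (√L)⁻¹) {x y : Fin d → ℝ} (hx : vnorm x = 1) :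
    ((1 - c * (√L)⁻¹) * (1 - c / L) ^ (L - 1)) ^ 2 * vnorm (hiddenState σ α x L - y) ^ 2 ≤
      ∑ m, (deriv σ (mulVec' (α ⟨0, hL⟩) x m) * Gvec σ α x y 1 m) ^ 2 := by
  have hG := pow_mul_vnorm_le_vnorm_Gvec (x := x) (y := y) (fun z => (hσ.2.2 z).2.1) hcL hα hL
  have hσ' : ∀ m, 1 - c * (√L)⁻¹ ≤ deriv σ (mulVec' (α ⟨0, hL⟩) x m) := fun m => by
    have hz : |mulVec' (α ⟨0, hL⟩) x m| ≤ c * (√L)⁻¹ :=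
      calc _ ≤ frobNorm (α ⟨0, hL⟩) * vnorm x := abs_mulVec'_le _ _ _
        _ ≤ c * (√L)⁻¹ := by rw [hx, mul_one]; exact hα _
    linarith [hσ.one_sub_abs_le_deriv (mulVec' (α ⟨0, hL⟩) x m)]
  calc ((1 - c * (√L)⁻¹) * (1 - c / L) ^ (L - 1)) ^ 2 * vnorm (hiddenState σ α x L - y) ^ 2
      = (1 - c * (√L)⁻¹) ^ 2 * ((1 - c / L) ^ (L - 1) * vnorm (hiddenState σ α x L - y)) ^ 2 := by
        ring
    _ ≤ (1 - c * (√L)⁻¹) ^ 2 * vnorm (Gvec σ α x y 1) ^ 2 := by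
        gcongr
        exact mul_nonneg (pow_nonneg (by linarith) _) (vnorm_nonneg _)
    _ = ∑ m, (1 - c * (√L)⁻¹) ^ 2 * Gvec σ α x y 1 m ^ 2 := by rw [vnorm_sq, Finset.mul_sum]
    _ ≤ _ := by
        gcongr with m
        rw [mul_pow]
        gcongr
        exact hσ' m

lemma gradEntry_zero_eq (hσ : Differentiable ℝ σ) (hL : 0 < L) (x y : Fin N → Fin d → ℝ)
    (α : Fin L → Fin d → Fin d → ℝ) (m n : Fin d) :
    gradEntry σ x y α ⟨0, hL⟩ m n = (√L)⁻¹ / N * ∑ i,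
      deriv σ (mulVec' (α ⟨0, hL⟩) (x i) m) * Gvec σ α (x i) (y i) 1 m * x i n := by
  have he : ∀ k (hk : k < L), 1 ≤ k →
      (Pi.single ⟨0, hL⟩ (Pi.single m (Pi.single n 1)) : Fin L → Fin d → Fin d → ℝ) ⟨k, hk⟩ = 0 :=
    fun k hk hk1 => Pi.single_eq_of_ne (Fin.ne_of_val_ne (show k ≠ 0 by omega)) _
  rw [gradEntry, fderiv_loss_apply hσ]
  simp only [← sum_Gvec_mul_hiddenStateTangent hL he, hiddenStateTangent_one_single hL, mul_ite,
    mul_zero, Finset.sum_ite_eq', Finset.mem_univ, if_true, Finset.mul_sum]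
  exact Finset.sum_congr rfl fun i _ => by ring

lemma sum_sq_gradEntry_zero_ge (hσ : ActAssump σ) (hL : 0 < L)
    {α : Fin L → Fin d → Fin d → ℝ} {c : ℝ} (hs : c * (√L)⁻¹ ≤ 1) (hcL : c / L ≤ 1)
    (hα : ∀ k, frobNorm (α k) ≤ c * (√L)⁻¹) (x y : Fin N → Fin d → ℝ)
    (hx : ∀ i, vnorm (x i) = 1) {ε : ℝ} (hε : 0 ≤ ε) (hεN : ε * (N - 1) ≤ 1 / 8)
    (hxx : ∀ i j, i ≠ j → |∑ v, x i v * x j v| ≤ ε) :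
    ((√L)⁻¹ / N) ^ 2 * (7 / 8 * ∑ i, ((1 - c * (√L)⁻¹) * (1 - c / L) ^ (L - 1)) ^ 2 *
      vnorm (hiddenState σ α (x i) L - y i) ^ 2) ≤ ∑ m, ∑ n, gradEntry σ x y α ⟨0, hL⟩ m n ^ 2 := by
  set a : Fin N → Fin d → ℝ :=
    fun i m => deriv σ (mulVec' (α ⟨0, hL⟩) (x i) m) * Gvec σ α (x i) (y i) 1 m
  have hgrad : ∑ m, ∑ n, gradEntry σ x y α ⟨0, hL⟩ m n ^ 2 =
      ((√L)⁻¹ / N) ^ 2 * ∑ m, ∑ n, (∑ i, a i m * x i n) ^ 2 := by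
    simp only [gradEntry_zero_eq hσ.differentiable hL, mul_pow, ← Finset.mul_sum, a]
  have hquad := one_sub_mul_sum_sq_le_sum_sq_sum_mul a x hε hx hxx
  rw [Fintype.card_fin] at hquad
  rw [hgrad]
  gcongr ((√L)⁻¹ / N) ^ 2 * ?_
  calc _ ≤ 7 / 8 * ∑ i, ∑ m, a i m ^ 2 := by
        gcongr with i
        exact sq_mul_vnorm_sq_le_sum_sq_deriv_mul_Gvec hσ hL hs hcL hα (hx i)
    _ ≤ (1 - ε * (N - 1)) * ∑ i, ∑ m, a i m ^ 2 := by gcongr; linarith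
    _ ≤ _ := hquad

lemma loss_eq_sum_vnorm_sq (x y : Fin N → Fin d → ℝ) (α : Fin L → Fin d → Fin d → ℝ) :
    loss σ x y α = 1 / (2 * N) * ∑ i, vnorm (hiddenState σ α (x i) L - y i) ^ 2 := by
  simp only [loss, vnorm_sq, Pi.sub_apply]
  congr 1
  exact Finset.sum_congr rfl fun i _ => Finset.sum_congr rfl fun j _ => by ring

end Gradient

/-- **Lower bound on the gradient with respect to the first layer (Lemma 3.1).** -/
theorem statement6 {d L N : ℕ} (hL : 1 ≤ L) (hN : 1 ≤ N)
    {σ : ℝ → ℝ} (hσ : ActAssump σ)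
    (c₀ : ℝ) (hc₀ : 0 < c₀)
    (hL1 : 5 * c₀ ≤ (L : ℝ)) (hL2 : 4 * c₀ ^ 2 ≤ (L : ℝ))
    (x y : Fin N → Fin d → ℝ)
    (hx : ∀ i, vnorm (x i) = 1)
    (hxx : ∀ i j, i ≠ j → |∑ v, x i v * x j v| ≤ (8 * N : ℝ)⁻¹ * Real.exp (-(4 * c₀)))
    (α : Fin L → Fin d → Fin d → ℝ)
    (hα : ∀ k, frobNorm (α k) ≤ c₀ * (Real.sqrt L)⁻¹) :
    (1 / (4 * N)) * Real.exp (-(2 * c₀)) * (L : ℝ)⁻¹ * loss σ x y α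
      ≤ ∑ m, ∑ n, gradEntry σ x y α ⟨0, by omega⟩ m n ^ 2 := by
  have hLpos : (0 : ℝ) < L := by exact_mod_cast hL
  have hs : c₀ * (√L)⁻¹ ≤ 1 := (mul_inv_sqrt_le_half hc₀.le hL2).trans (by norm_num)
  have ht : c₀ / L ≤ 1 := by rw [div_le_one hLpos]; linarith
  have hεN : (8 * N : ℝ)⁻¹ * Real.exp (-(4 * c₀)) * (N - 1) ≤ 1 / 8 :=
    inv_eight_mul_mul_sub_one_le hN (Real.exp_nonneg _) (Real.exp_le_one_iff.mpr (by linarith))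
  refine le_trans ?_ (sum_sq_gradEntry_zero_ge hσ hL hs ht hα x y hx (by positivity) hεN hxx)
  rw [loss_eq_sum_vnorm_sq, ← Finset.mul_sum]
  calc 1 / (4 * N) * Real.exp (-(2 * c₀)) * (L : ℝ)⁻¹ *
        (1 / (2 * N) * ∑ i, vnorm (hiddenState σ α (x i) L - y i) ^ 2)
      = ((√L)⁻¹ / N) ^ 2 * (1 / 8 * Real.exp (-(2 * c₀)) *
          ∑ i, vnorm (hiddenState σ α (x i) L - y i) ^ 2) := by
        rw [div_pow, inv_pow, Real.sq_sqrt hLpos.le]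
        ring
    _ ≤ _ := by
        rw [← mul_assoc (7 / 8)]
        gcongr ((√L)⁻¹ / N) ^ 2 * (?_ * _)
        linarith [exp_neg_two_mul_le_seven_mul_sq hc₀ hL1 hL2]
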